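/- Let ψ be a unit vector in the tensor product ℂ^(M×C), let ρ_M = tr_C(ψψ*) and ρ_C = tr_M(ψψ*) be its reduced density matrices. Then for every real t, (ρ_M^t ⊗ 1_C) ψ = (1_M ⊗ ρ_C^t) ψ as vectors in ℂ^(M×C), where the real matrix powers of the positive semidefinite matrices ρ_M and ρ_C are taken on their supports (0^t = 0). -/

import Mathlib

open scoped Kronecker ComplexOrder
open Matrix

/-- Real power of a matrix via the functional calculus on the eigenvalues,
with the convention `0 ^ t = 0` (powers taken on the support). -/
noncomputable def matRpow {n : Type*} [Fintype n] [DecidableEq n]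
    (A : Matrix n n ℂ) (t : ℝ) : Matrix n n ℂ :=
  if hA : A.IsHermitian then
    (hA.eigenvectorUnitary : Matrix n n ℂ) *
      Matrix.diagonal (fun i =>
        ((if hA.eigenvalues i = 0 then (0 : ℝ) else (hA.eigenvalues i) ^ t : ℝ) : ℂ)) *
      star (hA.eigenvectorUnitary : Matrix n n ℂ)
  else 0

/-- Matrix logarithm on the support. -/
noncomputable def matLog {n : Type*} [Fintype n] [DecidableEq n]
    (A : Matrix n n ℂ) : Matrix n n ℂ :=
  if hA : A.IsHermitian then
    (hA.eigenvectorUnitary : Matrix n n ℂ) *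
      Matrix.diagonal (fun i => ((Real.log (hA.eigenvalues i) : ℝ) : ℂ)) *
      star (hA.eigenvectorUnitary : Matrix n n ℂ)
  else 0

/-- Partial trace over the first tensor factor. -/
noncomputable def trFst {a b : Type*} [Fintype a] (M : Matrix (a × b) (a × b) ℂ) :
    Matrix b b ℂ :=
  Matrix.of fun j j' => ∑ i, M (i, j) (i, j')

/-- Partial trace over the second tensor factor. -/
noncomputable def trSnd {a b : Type*} [Fintype b] (M : Matrix (a × b) (a × b) ℂ) :
    Matrix a a ℂ :=
  Matrix.of fun i i' => ∑ j, M (i, j) (i', j)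

/-- Partial trace over the third factor of a tripartite system. -/
noncomputable def trThird {a b c : Type*} [Fintype c]
    (M : Matrix (a × b × c) (a × b × c) ℂ) : Matrix (a × b) (a × b) ℂ :=
  Matrix.of fun p p' => ∑ k, M (p.1, p.2, k) (p'.1, p'.2, k)

/-- Partial trace over the second factor of a tripartite system. -/
noncomputable def trSecond {a b c : Type*} [Fintype b]
    (M : Matrix (a × b × c) (a × b × c) ℂ) : Matrix (a × c) (a × c) ℂ :=
  Matrix.of fun p p' => ∑ j, M (p.1, j, p.2) (p'.1, j, p'.2)

/-- Partial trace over the first two factors of a tripartite system. -/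
noncomputable def trFstSnd {a b c : Type*} [Fintype a] [Fintype b]
    (M : Matrix (a × b × c) (a × b × c) ℂ) : Matrix c c ℂ :=
  Matrix.of fun k k' => ∑ i, ∑ j, M (i, j, k) (i, j, k')

/-- Partial trace over the first and third factors of a tripartite system. -/
noncomputable def trFstThird {a b c : Type*} [Fintype a] [Fintype c]
    (M : Matrix (a × b × c) (a × b × c) ℂ) : Matrix b b ℂ :=
  Matrix.of fun j j' => ∑ i, ∑ k, M (i, j, k) (i, j', k)

/-- Quantum Rényi relative entropy `D_α(ρ‖σ)`. -/
noncomputable def renyiDiv {n : Type*} [Fintype n] [DecidableEq n]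
    (α : ℝ) (ρ σ : Matrix n n ℂ) : ℝ :=
  (α - 1)⁻¹ * Real.log ((matRpow ρ α * matRpow σ (1 - α)).trace.re)

/-- Sandwiched quantum Rényi divergence `D̃_α(ρ‖σ)`. -/
noncomputable def sandwichedRenyiDiv {n : Type*} [Fintype n] [DecidableEq n]
    (α : ℝ) (ρ σ : Matrix n n ℂ) : ℝ :=
  (α - 1)⁻¹ * Real.log
    ((matRpow (matRpow σ ((1 - α) / (2 * α)) * ρ * matRpow σ ((1 - α) / (2 * α))) α).trace.re)

/-- Quantum relative entropy `D(ρ‖σ)`. -/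
noncomputable def relEntropy {n : Type*} [Fintype n] [DecidableEq n]
    (ρ σ : Matrix n n ℂ) : ℝ :=
  (ρ * (matLog ρ - matLog σ)).trace.re

/-! For `t = 1` the identity `(ρ_M ⊗ 1) ψ = (1 ⊗ ρ_C) ψ` is a direct computation: both sides are
`∑ ψ(i,j') ψ̄(i',j') ψ(i',j)`. As `ρ_M ⊗ 1` and `1 ⊗ ρ_C` commute, the identity passes to every
polynomial in them. The marginals are Hermitian with finite spectra, on which `x ↦ x ^ t`
(with `0 ↦ 0`) agrees with one interpolating polynomial, so both real powers are that polynomial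
of the respective marginal. -/

open Polynomial

theorem Polynomial.exists_eqOn_eval {F : Type*} [Field F] {s : Set F} (hs : s.Finite)
    (f : F → F) : ∃ q : F[X], s.EqOn q.eval f := by
  classical
  exact ⟨Lagrange.interpolate hs.toFinset id f, fun _ hx =>
    Lagrange.eval_interpolate_at_node f (Set.injOn_id _) (hs.mem_toFinset.2 hx)⟩

section Kronecker

variable {R S : Type*} [CommSemiring R] [CommSemiring S] [Algebra S R]
  {m n : Type*} [Fintype m] [DecidableEq m] [Fintype n] [DecidableEq n]

theorem Matrix.aeval_mulVec_eq_of_commute {X Y : Matrix n n R} (hXY : Commute X Y)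
    {v : n → R} (h : X *ᵥ v = Y *ᵥ v) (q : S[X]) : aeval X q *ᵥ v = aeval Y q *ᵥ v := by
  have hpow : ∀ k : ℕ, X ^ k *ᵥ v = Y ^ k *ᵥ v := by
    intro k
    induction k with
    | zero => rfl
    | succ k ih =>
      rw [pow_succ, ← mulVec_mulVec, h, mulVec_mulVec, (hXY.pow_left k).eq, ← mulVec_mulVec,
        ih, mulVec_mulVec, ← pow_succ']
  induction q using Polynomial.induction_on' with
  | add p q hp hq => simp only [map_add, add_mulVec, hp, hq]
  | monomial k a => rw [aeval_monomial, ← mulVec_mulVec, hpow, mulVec_mulVec, ← aeval_monomial]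

theorem Matrix.aeval_kronecker_one (A : Matrix m m R) (q : S[X]) :
    aeval (A ⊗ₖ (1 : Matrix n n R)) q = aeval A q ⊗ₖ 1 := by
  simpa using aeval_algHom_apply
    (((kroneckerAlgEquiv m n R).toAlgHom.comp Algebra.TensorProduct.includeLeft).restrictScalars S)
    A q

theorem Matrix.aeval_one_kronecker (B : Matrix n n R) (q : S[X]) :
    aeval ((1 : Matrix m m R) ⊗ₖ B) q = 1 ⊗ₖ aeval B q := by
  simpa using aeval_algHom_apply
    (((kroneckerAlgEquiv m n R).toAlgHom.comp Algebra.TensorProduct.includeRight).restrictScalars S)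
    B q

theorem Matrix.commute_kronecker_one_one_kronecker (A : Matrix m m R) (B : Matrix n n R) :
    Commute (A ⊗ₖ (1 : Matrix n n R)) ((1 : Matrix m m R) ⊗ₖ B) := by
  simp only [Commute, SemiconjBy, ← mul_kronecker_mul, Matrix.mul_one, Matrix.one_mul]

end Kronecker

section Marginals

variable {m c : Type*}

theorem Matrix.IsHermitian.trSnd [Fintype c] {M : Matrix (m × c) (m × c) ℂ} (hM : M.IsHermitian) :
    (trSnd M).IsHermitian := by
  ext i i'
  simp only [conjTranspose_apply, _root_.trSnd, of_apply, star_sum, hM.apply]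

theorem Matrix.IsHermitian.trFst [Fintype m] {M : Matrix (m × c) (m × c) ℂ} (hM : M.IsHermitian) :
    (trFst M).IsHermitian := by
  ext j j'
  simp only [conjTranspose_apply, _root_.trFst, of_apply, star_sum, hM.apply]

variable [Fintype m] [DecidableEq m] [Fintype c] [DecidableEq c]

theorem marginal_mulVec_swap (ψ : m × c → ℂ) :
    (trSnd (vecMulVec ψ (star ψ)) ⊗ₖ (1 : Matrix c c ℂ)) *ᵥ ψ =
      ((1 : Matrix m m ℂ) ⊗ₖ trFst (vecMulVec ψ (star ψ))) *ᵥ ψ := by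
  ext ⟨i, j⟩
  simp only [mulVec, dotProduct, _root_.trSnd, _root_.trFst, vecMulVec_apply, Pi.star_apply,
    RCLike.star_def, kroneckerMap_apply, of_apply, one_apply, mul_ite, mul_one, mul_zero, ite_mul,
    one_mul, zero_mul, Finset.sum_mul, Fintype.sum_prod_type, Finset.sum_ite_eq, Finset.mem_univ,
    ↓reduceIte, Finset.sum_ite_irrel, Finset.sum_const_zero]
  rw [Finset.sum_comm]
  exact Finset.sum_congr rfl fun _ _ => Finset.sum_congr rfl fun _ _ => by ring

end Marginals

theorem matRpow_eq_aeval {n : Type*} [Fintype n] [DecidableEq n] {A : Matrix n n ℂ}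
    (hA : A.IsHermitian) {t : ℝ} {q : ℝ[X]}
    (hq : (spectrum ℝ A).EqOn q.eval (fun x => if x = 0 then 0 else x ^ t)) :
    matRpow A t = aeval A q := by
  rw [← cfc_polynomial q A hA.isSelfAdjoint, cfc_congr hq, hA.cfc_eq, IsHermitian.cfc,
    Unitary.conjStarAlgAut_apply, matRpow, dif_pos hA]
  congr 3

theorem rpow_marginal_swap_general {m c : Type*}
    [Fintype m] [DecidableEq m] [Fintype c] [DecidableEq c]
    (ψ : m × c → ℂ) (t : ℝ) :
    (matRpow (trSnd (vecMulVec ψ (star ψ))) t ⊗ₖ (1 : Matrix c c ℂ)) *ᵥ ψ =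
      ((1 : Matrix m m ℂ) ⊗ₖ matRpow (trFst (vecMulVec ψ (star ψ))) t) *ᵥ ψ := by
  have hψ : (vecMulVec ψ (star ψ)).IsHermitian := (posSemidef_vecMulVec_self_star ψ).isHermitian
  obtain ⟨q, hq⟩ := exists_eqOn_eval
    ((trSnd (vecMulVec ψ (star ψ))).finite_real_spectrum.union
      (trFst (vecMulVec ψ (star ψ))).finite_real_spectrum)
    (fun x => if x = 0 then 0 else x ^ t)
  rw [matRpow_eq_aeval hψ.trSnd (hq.mono Set.subset_union_left),
    matRpow_eq_aeval hψ.trFst (hq.mono Set.subset_union_right),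
    ← aeval_kronecker_one, ← aeval_one_kronecker]
  exact aeval_mulVec_eq_of_commute (commute_kronecker_one_one_kronecker _ _)
    (marginal_mulVec_swap ψ) q

theorem rpow_marginal_swap {m c : Type*}
    [Fintype m] [DecidableEq m] [Fintype c] [DecidableEq c]
    (ψ : m × c → ℂ) (hψ : star ψ ⬝ᵥ ψ = 1) (t : ℝ) :
    (matRpow (trSnd (vecMulVec ψ (star ψ))) t ⊗ₖ (1 : Matrix c c ℂ)) *ᵥ ψ =
      ((1 : Matrix m m ℂ) ⊗ₖ matRpow (trFst (vecMulVec ψ (star ψ))) t) *ᵥ ψ :=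
  rpow_marginal_swap_general ψ t
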